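/- Let D be a compact metric space, H a separable real Hilbert space, and let (u_k) be a sequence of H-valued vector measures on D each supported on at most N points. Then every weak-* accumulation point û of (u_k) is supported on at most N points. -/

import Mathlib

open NormedSpace

/-- The support of an `H`-valued vector measure `u` on `D` (identified with an element of
the dual of `C(D,H)`): a point `x` belongs to the support of `|u|` iff `u` does not vanish
on any neighborhood of `x`, i.e. for every neighborhood `U` of `x` there is a test
function `φ` supported in `U` with `⟨u, φ⟩ ≠ 0`. -/
def measSupport {D H : Type*} [TopologicalSpace D] [CompactSpace D]
    [NormedAddCommGroup H] [NormedSpace ℝ H] (u : WeakDual ℝ C(D, H)) : Set D :=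
  {x : D | ∀ U ∈ nhds x, ∃ φ : C(D, H), (∀ y ∉ U, φ y = 0) ∧ u φ ≠ 0}

/-! A functional vanishes on every test function supported away from its support (glue the local
vanishing with a partition of unity). Hence the support is lower semicontinuous in the weak-*
topology: if `x ∈ supp û` and `φ` is a test function near `x` with `û φ ≠ 0`, then every `v` in
the weak-* open set `{v | v φ ≠ 0}` has support near `x`. Separating finitely many points of
`supp û` by disjoint open sets, some `u k` has a support point in each of them, so their number is
at most `N`. -/

open Filter Topology

theorem Set.finite_and_ncard_le_of_forall_finite_subset {α : Type*} {s : Set α} {n : ℕ}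
    (h : ∀ t ⊆ s, t.Finite → t.ncard ≤ n) : s.Finite ∧ s.ncard ≤ n := by
  have hs : s.Finite := by
    by_contra hinf
    obtain ⟨t, hts, htfin, htcard⟩ := Set.Infinite.exists_subset_ncard_eq hinf (n + 1)
    have := h t hts htfin
    omega
  exact ⟨hs, h s subset_rfl hs⟩

theorem Set.ncard_le_ncard_of_pairwiseDisjoint {α ι : Type*} {s : Set ι} {t : Set α}
    {U : ι → Set α} (ht : t.Finite) (hU : s.PairwiseDisjoint U)
    (hmeet : ∀ i ∈ s, (t ∩ U i).Nonempty) : s.ncard ≤ t.ncard := by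
  obtain rfl | ⟨i₀, hi₀⟩ := s.eq_empty_or_nonempty
  · simp
  have : Nonempty α := ⟨(hmeet i₀ hi₀).some⟩
  choose! f hft hfU using fun i hi => (hmeet i hi : ∃ a, a ∈ t ∧ a ∈ U i)
  refine Set.ncard_le_ncard_of_injOn f hft (fun i hi j hj hij => ?_) ht
  by_contra hne
  exact Set.disjoint_left.1 (hU hi hj hne) (hfU i hi) (hij ▸ hfU j hj)

section

variable {D H : Type*} [TopologicalSpace D] [CompactSpace D] [NormedAddCommGroup H]
  [NormedSpace ℝ H]

theorem apply_eq_zero_of_disjoint_measSupport [T2Space D] (u : WeakDual ℝ C(D, H))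
    {φ : C(D, H)} (hφ : Disjoint (tsupport φ) (measSupport u)) : u φ = 0 := by
  have hloc : ∀ x ∈ tsupport φ, ∃ V ∈ 𝓝 x, ∀ ψ : C(D, H), (∀ y ∉ V, ψ y = 0) → u ψ = 0 := by
    intro x hx
    simpa [measSupport] using hφ.notMem_of_mem_left hx
  choose! V hVx hVu using hloc
  obtain ⟨t, htK, hcover⟩ := (isClosed_tsupport φ).isCompact.elim_nhds_subcover
    (fun x => interior (V x)) fun x hx => interior_mem_nhds.2 (hVx x hx)
  obtain ⟨ρ, hρV⟩ := PartitionOfUnity.exists_isSubordinate (isClosed_tsupport φ)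
    (fun x : t => interior (V x)) (fun _ => isOpen_interior)
    (by simpa [Set.iUnion_subtype] using hcover)
  have hsum : φ = ∑ i : t, ρ i • φ := by
    ext y
    simp only [ContinuousMap.sum_apply, ContinuousMap.smul_apply', ← Finset.sum_smul]
    by_cases hy : y ∈ tsupport φ
    · rw [← finsum_eq_sum_of_fintype, ρ.sum_eq_one hy, one_smul]
    · simp [image_eq_zero_of_notMem_tsupport hy]
  rw [hsum, map_sum]
  refine Finset.sum_eq_zero fun i _ => hVu i (htK i i.2) _ fun y hy => ?_
  have : ρ i y = 0 := image_eq_zero_of_notMem_tsupport fun h => hy (interior_subset (hρV i h))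
  simp [this]

theorem eventually_measSupport_inter_nonempty [T2Space D] {u : WeakDual ℝ C(D, H)} {x : D}
    (hx : x ∈ measSupport u) {U : Set D} (hU : U ∈ 𝓝 x) :
    ∀ᶠ v in 𝓝 u, (measSupport v ∩ U).Nonempty := by
  obtain ⟨K, hKx, hKc, hKU⟩ := exists_mem_nhds_isClosed_subset hU
  obtain ⟨φ, hφK, huφ⟩ := hx K hKx
  have htsupport : tsupport φ ⊆ K :=
    closure_minimal (fun y hy => by_contra fun hyK => hy (hφK y hyK)) hKc
  filter_upwards [(WeakDual.eval_continuous φ).continuousAt.eventually_ne huφ] with v hvφ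
  by_contra hvU
  refine hvφ (apply_eq_zero_of_disjoint_measSupport v (Set.disjoint_left.2 fun y hy hyv => ?_))
  exact hvU ⟨y, hyv, hKU (htsupport hy)⟩

end

theorem accumulation_point_support_card_le_general
    (D H : Type*) [MetricSpace D] [CompactSpace D]
    [NormedAddCommGroup H] [InnerProductSpace ℝ H] (N : ℕ)
    (u : ℕ → WeakDual ℝ C(D, H))
    (hsupp : ∀ k, (measSupport (u k)).Finite ∧ (measSupport (u k)).ncard ≤ N)
    (uhat : WeakDual ℝ C(D, H)) (hacc : MapClusterPt uhat Filter.atTop u) :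
    (measSupport uhat).Finite ∧ (measSupport uhat).ncard ≤ N := by
  refine Set.finite_and_ncard_le_of_forall_finite_subset fun s hs hsfin => ?_
  obtain ⟨U, hU, hdisj⟩ := hsfin.t2_separation
  have hnear : ∀ᶠ v in 𝓝 uhat, ∀ x ∈ s, (measSupport v ∩ U x).Nonempty :=
    (eventually_all_finite hsfin).2 fun x hx =>
      eventually_measSupport_inter_nonempty (hs hx) ((hU x).2.mem_nhds (hU x).1)
  obtain ⟨k, hk⟩ := (hacc.frequently hnear).exists
  exact (Set.ncard_le_ncard_of_pairwiseDisjoint (hsupp k).1 hdisj hk).trans (hsupp k).2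

/-- Let `D` be a compact metric space, `H` a separable real Hilbert
space, and `(u_k)` a sequence of `H`-valued vector measures on `D`, each supported on at
most `N` points.  Then every weak-* accumulation point `û` of `(u_k)` is supported on at
most `N` points. -/
theorem accumulation_point_support_card_le
    (D H : Type*) [MetricSpace D] [CompactSpace D]
    [NormedAddCommGroup H] [InnerProductSpace ℝ H] [CompleteSpace H]
    [TopologicalSpace.SeparableSpace H] (N : ℕ)
    (u : ℕ → WeakDual ℝ C(D, H))
    (hsupp : ∀ k, (measSupport (u k)).Finite ∧ (measSupport (u k)).ncard ≤ N)
    (uhat : WeakDual ℝ C(D, H)) (hacc : MapClusterPt uhat Filter.atTop u) :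
    (measSupport uhat).Finite ∧ (measSupport uhat).ncard ≤ N :=
  accumulation_point_support_card_le_general D H N u hsupp uhat hacc
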